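/- arXiv:2502.11630 — 6 statements merged into one kernel-verified Lean document; each statement's English description precedes it below -/
import Mathlib

section
/- Let (A,D) be a dependence alphabet and B₁,…,Bₙ ⊆ A sets of letters with D = ⋃_{1≤i≤n} Bᵢ × Bᵢ. Then for any words u, v ∈ A*, u ~ v if and only if π_{Bᵢ}(u) = π_{Bᵢ}(v) for all 1 ≤ i ≤ n. -/
variable {A : Type*}

/-- One commutation step: swap two adjacent independent letters. -/
inductive SwapStep (I : A → A → Prop) : List A → List A → Prop
  | swap (u v : List A) (a b : A) (h : I a b) :
      SwapStep I (u ++ a :: b :: v) (u ++ b :: a :: v)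

/-- Trace equivalence: the least monoid congruence on `A*` with `ab ~ ba`
for all independent pairs `(a,b) ∈ I`. -/
def TraceEquiv (I : A → A → Prop) : List A → List A → Prop :=
  Relation.EqvGen (SwapStep I)

/-- The independence relation induced by a dependence relation `D`. -/
def Indep (D : A → A → Prop) : A → A → Prop := fun a b => a ≠ b ∧ ¬ D a b

/-- A word relation `R` is left-closed if `~ ∘ R ⊆ R ∘ ~`. -/
def LeftClosed (I : A → A → Prop) (R : List A → List A → Prop) : Prop :=
  ∀ u u' v', TraceEquiv I u u' → R u' v' → ∃ v, R u v ∧ TraceEquiv I v v'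

private lemma consTE {I : A → A → Prop} (c : A) {u v : List A}
    (h : TraceEquiv I u v) : TraceEquiv I (c :: u) (c :: v) := by
  induction h with
  | rel x y hxy =>
    rcases hxy with ⟨s, t, a, b, hab⟩
    exact Relation.EqvGen.rel _ _ (by
      have := SwapStep.swap (I := I) (c :: s) t a b hab
      simpa using this)
  | refl x => exact Relation.EqvGen.refl _
  | symm x y _ ih => exact Relation.EqvGen.symm _ _ ih
  | trans x y z _ _ ih1 ih2 => exact Relation.EqvGen.trans _ _ _ ih1 ih2

private lemma shiftTE {I : A → A → Prop} {a : A} :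
    ∀ {v₁ : List A}, (∀ b ∈ v₁, I a b) → ∀ v₂,
      TraceEquiv I (v₁ ++ a :: v₂) (a :: (v₁ ++ v₂))
  | [], _, v₂ => Relation.EqvGen.refl _
  | c :: w, h, v₂ => by
    have ih := shiftTE (fun b hb => h b (List.mem_cons_of_mem _ hb)) v₂
    have step : TraceEquiv I (a :: c :: (w ++ v₂)) (c :: a :: (w ++ v₂)) :=
      Relation.EqvGen.rel _ _ (by
        have := SwapStep.swap (I := I) [] (w ++ v₂) a c (h c List.mem_cons_self)
        simpa using this)
    exact Relation.EqvGen.trans _ _ _ (consTE c ih) (Relation.EqvGen.symm _ _ step)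

private lemma firstSplit {a : A} [DecidableEq A] :
    ∀ {v : List A}, a ∈ v → ∃ s t, v = s ++ a :: t ∧ a ∉ s
  | [], h => absurd h List.not_mem_nil
  | c :: w, h => by
    by_cases hc : a = c
    · exact ⟨[], w, by simp [hc], by simp⟩
    · rcases firstSplit (by
        rcases List.mem_cons.mp h with h1 | h1
        · exact absurd h1 hc
        · exact h1) with ⟨s, t, hst, hns⟩
      exact ⟨c :: s, t, by simp [hst], by
        simp only [List.mem_cons, not_or]
        exact ⟨hc, hns⟩⟩

theorem stmt3 [Fintype A] [DecidableEq A] (D : A → A → Prop)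
    (hrefl : ∀ a, D a a) (hsym : ∀ a b, D a b → D b a)
    (n : ℕ) (B : Fin n → Finset A)
    (hD : ∀ a b, D a b ↔ ∃ i, a ∈ B i ∧ b ∈ B i)
    (u v : List A) :
    TraceEquiv (Indep D) u v ↔ ∀ i, u.filter (· ∈ B i) = v.filter (· ∈ B i) := by
  constructor
  · intro h i
    induction h with
    | rel x y hxy =>
      rcases hxy with ⟨s, t, a, b, hab⟩
      have hnot : ¬ (a ∈ B i ∧ b ∈ B i) := fun ⟨ha, hb⟩ => hab.2 ((hD a b).mpr ⟨i, ha, hb⟩)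
      by_cases ha : a ∈ B i <;> by_cases hb : b ∈ B i <;>
        simp [List.filter_append, List.filter_cons, ha, hb] at *
    | refl x => rfl
    | symm x y _ ih => exact ih.symm
    | trans x y z _ _ ih1 ih2 => exact ih1.trans ih2
  · induction u generalizing v with
    | nil =>
      intro h
      cases v with
      | nil => exact Relation.EqvGen.refl _
      | cons b w =>
        obtain ⟨i, hb, -⟩ := (hD b b).mp (hrefl b)
        have := h i
        simp [List.filter_cons, hb] at this
    | cons a u' ih =>
      intro h
      obtain ⟨i₀, ha0, -⟩ := (hD a a).mp (hrefl a)
      have hav : a ∈ v := by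
        have := h i₀
        have hmem : a ∈ v.filter (· ∈ B i₀) := by
          rw [← this]; simp [List.filter_cons, ha0]
        exact List.mem_of_mem_filter hmem
      rcases firstSplit hav with ⟨v₁, v₂, hv, hna⟩
      -- all letters of v₁ are independent from a
      have hindep : ∀ b ∈ v₁, Indep D a b := by
        intro b hb
        refine ⟨fun hab => hna (hab ▸ hb), fun hDab => ?_⟩
        obtain ⟨i, hai, hbi⟩ := (hD a b).mp hDab
        have hfe := h i
        rw [hv] at hfe
        simp only [List.filter_append, List.filter_cons, hai, decide_true] at hfe
        -- head of lhs is a, head of rhs is first B i elem of v₁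
        have hne : v₁.filter (· ∈ B i) ≠ [] := by
          intro hnil
          have : b ∈ v₁.filter (· ∈ B i) := List.mem_filter.mpr ⟨hb, by simpa using hbi⟩
          simp [hnil] at this
        rcases List.exists_cons_of_ne_nil hne with ⟨c, cs, hc⟩
        have hcv : c ∈ v₁ := List.mem_of_mem_filter (hc ▸ (List.mem_cons_self : c ∈ c :: cs))
        rw [hc] at hfe
        have : a = c := by
          have := congrArg List.head? hfe
          simpa using this
        exact hna (this ▸ hcv)
      have hTE : TraceEquiv (Indep D) v (a :: (v₁ ++ v₂)) := by
        rw [hv]; exact shiftTE hindep v₂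
      have hrest : ∀ i, u'.filter (· ∈ B i) = (v₁ ++ v₂).filter (· ∈ B i) := by
        intro i
        have hfe := h i
        rw [hv] at hfe
        by_cases hai : a ∈ B i
        · have hv1 : v₁.filter (· ∈ B i) = [] := by
            rw [List.filter_eq_nil_iff]
            intro b hb
            simp only [decide_eq_true_eq]
            intro hbi
            exact (hindep b hb).2 ((hD a b).mpr ⟨i, hai, hbi⟩)
          simp only [List.filter_append, List.filter_cons, hai, decide_true, hv1,
            List.nil_append] at hfe ⊢
          injection hfe
        · simp only [List.filter_append, List.filter_cons, hai, decide_false] at hfe ⊢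
          simpa using hfe
      have := ih (v₁ ++ v₂) hrest
      exact Relation.EqvGen.trans _ _ _ (consTE a this) (Relation.EqvGen.symm _ _ hTE)
end

section
/- The trace monoid M(D) = A*/~ is cancellative: for all traces s, t, t', u, if s·t·u = s·t'·u then t = t'. -/
variable {A : Type*}

namespace TraceAux

variable {I : A → A → Prop}

theorem te_refl (x : List A) : TraceEquiv I x x := Relation.EqvGen.refl x

theorem te_symm {x y : List A} (h : TraceEquiv I x y) : TraceEquiv I y x :=
  Relation.EqvGen.symm x y h

theorem te_trans {x y z : List A} (h : TraceEquiv I x y) (h' : TraceEquiv I y z) :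
    TraceEquiv I x z := Relation.EqvGen.trans x y z h h'

theorem te_cons (a : A) {x y : List A} (h : TraceEquiv I x y) :
    TraceEquiv I (a :: x) (a :: y) := by
  induction h with
  | rel p q hpq =>
    cases hpq with
    | swap u v c d hI =>
      exact Relation.EqvGen.rel _ _ (by simpa using SwapStep.swap (a :: u) v c d hI)
  | refl p => exact te_refl _
  | symm p q _ ih => exact te_symm ih
  | trans p q r _ _ ih ih' => exact te_trans ih ih'

/-- Move a letter `a` across a block `p` of letters independent of `a`. -/
theorem te_move (a : A) (p q : List A) (hp : ∀ b ∈ p, I a b) :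
    TraceEquiv I (a :: (p ++ q)) (p ++ a :: q) := by
  induction p with
  | nil => exact te_refl _
  | cons b p ih =>
    have h1 : TraceEquiv I (a :: b :: (p ++ q)) (b :: a :: (p ++ q)) :=
      Relation.EqvGen.rel _ _ (by simpa using SwapStep.swap [] (p ++ q) a b (hp b (by simp)))
    exact te_trans h1 (te_cons b (ih (fun c hc => hp c (by simp [hc]))))

theorem count_swap [DecidableEq A] {x y : List A} (h : SwapStep I x y) (c : A) :
    x.count c = y.count c := by
  cases h with
  | swap u v a b hI =>
    simp only [List.count_append, List.count_cons]
    omega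

theorem te_count [DecidableEq A] {x y : List A} (h : TraceEquiv I x y) (c : A) :
    x.count c = y.count c := by
  induction h with
  | rel p q hpq => exact count_swap hpq c
  | refl p => rfl
  | symm p q _ ih => omega
  | trans p q r _ _ ih ih' => omega

theorem te_filter (p : A → Bool) (hp : ∀ a b, I a b → p a = false ∨ p b = false)
    {x y : List A} (h : TraceEquiv I x y) : x.filter p = y.filter p := by
  induction h with
  | rel s t hst =>
    cases hst with
    | swap u v a b hI =>
      simp only [List.filter_append, List.filter_cons]
      rcases hp a b hI with h1 | h1 <;> simp [h1]
  | refl s => rfl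
  | symm s t _ ih => exact ih.symm
  | trans s t r _ _ ih ih' => exact ih.trans ih'

/-- Split off the first occurrence of an element. -/
theorem first_occ {a : A} {v : List A} (h : a ∈ v) :
    ∃ p q, v = p ++ a :: q ∧ a ∉ p := by
  induction v with
  | nil => simp at h
  | cons b v ih =>
    by_cases hb : b = a
    · exact ⟨[], v, by simp [hb], by simp⟩
    · have h' : a ∈ v := by
        rcases List.mem_cons.1 h with h | h
        · exact absurd h.symm hb
        · exact h
      rcases ih h' with ⟨p, q, rfl, hnp⟩
      exact ⟨b :: p, q, by simp, by simp [hnp, Ne.symm hb]⟩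

/-- Projection characterization: equal projections onto dependent pairs imply
trace equivalence. -/
theorem te_of_proj [DecidableEq A] (D : A → A → Prop)
    (hrefl : ∀ a, D a a) (hsym : ∀ a b, D a b → D b a) :
    ∀ (x y : List A),
    (∀ c, x.count c = y.count c) →
    (∀ a b, D a b →
      x.filter (fun c => c = a ∨ c = b) = y.filter (fun c => c = a ∨ c = b)) →
    TraceEquiv (Indep D) x y := by
  intro x
  induction x with
  | nil =>
    intro y hc _
    have : y = [] := by
      apply List.eq_nil_iff_forall_not_mem.2
      intro c hcy
      have h1 := hc c
      simp at h1
      have h2 := List.count_pos_iff.2 hcy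
      omega
    subst this; exact te_refl _
  | cons a x ih =>
    intro y hc hf
    have hay : a ∈ y := by
      have := hc a
      simp [List.count_cons_self] at this
      exact List.count_pos_iff.1 (by omega)
    obtain ⟨p, q, rfl, hap⟩ := first_occ hay
    -- every letter of p is independent of a
    have hindep : ∀ b ∈ p, Indep D a b := by
      intro b hbp
      have hba : b ≠ a := fun e => hap (e ▸ hbp)
      refine ⟨hba.symm, fun hD => ?_⟩
      have hfe := hf a b hD
      rcases hpf : p.filter (fun c => decide (c = a ∨ c = b)) with _ | ⟨c, l⟩
      · have hmem : b ∈ p.filter (fun c => decide (c = a ∨ c = b)) := by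
          simp [List.mem_filter, hbp]
        rw [hpf] at hmem
        simp at hmem
      · have hcp : c ∈ p := by
          have : c ∈ p.filter (fun c => decide (c = a ∨ c = b)) := by
            rw [hpf]; simp
          exact (List.mem_filter.1 this).1
        have hca : c ≠ a := fun e => hap (e ▸ hcp)
        rw [List.filter_append, hpf] at hfe
        have hfa : (a :: x).filter (fun c => decide (c = a ∨ c = b)) =
            a :: x.filter (fun c => decide (c = a ∨ c = b)) := by simp
        rw [hfa] at hfe
        have := congrArg List.head? hfe
        simp at this
        exact hca this.symm
    -- y ~ a :: (p ++ q)
    have hmove : TraceEquiv (Indep D) (a :: (p ++ q)) (p ++ a :: q) :=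
      te_move a p q hindep
    -- apply induction hypothesis to x and p ++ q
    have hc' : ∀ c, x.count c = (p ++ q).count c := by
      intro c
      have h1 := hc c
      simp [List.count_append, List.count_cons] at h1 ⊢
      omega
    have hf' : ∀ b c, D b c →
        x.filter (fun d => decide (d = b ∨ d = c)) =
          (p ++ q).filter (fun d => decide (d = b ∨ d = c)) := by
      intro b c hD
      have hfe := hf b c hD
      simp only [List.filter_append, List.filter_cons] at hfe ⊢
      by_cases hab : a = b ∨ a = c
      · -- pair contains a; then p contains no letter of the pair
        have hpf : p.filter (fun d => decide (d = b ∨ d = c)) = [] := by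
          rw [List.filter_eq_nil_iff]
          intro d hdp
          simp only [decide_eq_true_eq]
          rintro (rfl | rfl)
          · rcases hab with rfl | rfl
            · exact hap hdp
            · exact (hindep d hdp).2 (hsym _ _ hD)
          · rcases hab with rfl | rfl
            · exact (hindep d hdp).2 hD
            · exact hap hdp
        rw [hpf] at hfe ⊢
        rw [if_pos (by simpa using hab), if_pos (by simpa using hab)] at hfe
        simpa using hfe
      · rw [if_neg (by simpa using hab), if_neg (by simpa using hab)] at hfe
        exact hfe
    have hx : TraceEquiv (Indep D) x (p ++ q) := ih (p ++ q) hc' hf'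
    exact te_trans (te_cons a hx) hmove

end TraceAux

theorem stmt4 [Fintype A] (D : A → A → Prop)
    (hrefl : ∀ a, D a a) (hsym : ∀ a b, D a b → D b a)
    (s t t' u : List A)
    (h : TraceEquiv (Indep D) (s ++ t ++ u) (s ++ t' ++ u)) :
    TraceEquiv (Indep D) t t' := by
  classical
  apply TraceAux.te_of_proj D hrefl hsym
  · intro c
    have := TraceAux.te_count h c
    simp [List.count_append] at this
    omega
  · intro a b hD
    have hcond : ∀ x y, Indep D x y →
        (decide (x = a ∨ x = b) = false) ∨ (decide (y = a ∨ y = b) = false) := by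
      intro x y hxy
      obtain ⟨hne, hnD⟩ := hxy
      by_contra hcon
      push_neg at hcon
      obtain ⟨h1, h2⟩ := hcon
      rw [ne_eq, Bool.not_eq_false, decide_eq_true_eq] at h1 h2
      rcases h1 with rfl | rfl <;> rcases h2 with rfl | rfl
      · exact hne rfl
      · exact hnD hD
      · exact hnD (hsym _ _ hD)
      · exact hne rfl
    have hfe := TraceAux.te_filter (fun c => decide (c = a ∨ c = b)) hcond h
    simp only [List.filter_append] at hfe
    have h1 := List.append_cancel_right hfe
    exact List.append_cancel_left h1
end

section
/- The superword relation ⪰ on A* (u ⪰ v iff v is a scattered subword of u) is left-closed: if u ~ u' and u' ⪰ v', then there exists v with u ⪰ v and v ~ v'. -/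
variable {A : Type*}

/-- Decompose a sublist of `p ++ b :: a :: q`. -/
lemma sublist_swap_decomp {p q v' : List A} {a b : A}
    (h : v'.Sublist (p ++ b :: a :: q)) :
    v'.Sublist (p ++ a :: b :: q) ∨
      ∃ v1 w, v' = v1 ++ b :: a :: w ∧ v1.Sublist p ∧ w.Sublist q := by
  rw [List.sublist_append_iff] at h
  obtain ⟨v1, v2, rfl, h1, h2⟩ := h
  rw [List.sublist_cons_iff] at h2
  rcases h2 with h2 | ⟨r, rfl, hr⟩
  · left
    exact h1.append (h2.trans (List.cons_sublist_cons.mpr (q.sublist_cons_self b)))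
  · rw [List.sublist_cons_iff] at hr
    rcases hr with hr | ⟨w, rfl, hw⟩
    · left
      refine h1.append ?_
      exact ((List.cons_sublist_cons.mpr hr).trans
        (((b :: q).sublist_cons_self a)))
    · right
      exact ⟨v1, w, rfl, h1, hw⟩

lemma step_sublist {I : A → A → Prop} {u u' v' : List A}
    (hs : SwapStep I u u') (h : v'.Sublist u') :
    ∃ v, v.Sublist u ∧ TraceEquiv I v v' := by
  obtain ⟨p, q, a, b, hI⟩ := hs
  rcases sublist_swap_decomp h with h | ⟨v1, w, rfl, h1, hw⟩
  · exact ⟨v', h, Relation.EqvGen.refl _⟩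
  · refine ⟨v1 ++ a :: b :: w, h1.append (List.cons_sublist_cons.mpr
      (List.cons_sublist_cons.mpr hw)), ?_⟩
    exact Relation.EqvGen.rel _ _ (SwapStep.swap v1 w a b hI)

theorem stmt9 [Fintype A] (D : A → A → Prop)
    (hrefl : ∀ a, D a a) (hsym : ∀ a b, D a b → D b a) :
    LeftClosed (Indep D) (fun u v : List A => v.Sublist u) := by
  intro u u' v' hequiv hsub
  have key : ∀ x y : List A, TraceEquiv (Indep D) x y →
      (∀ w, w.Sublist y → ∃ v, v.Sublist x ∧ TraceEquiv (Indep D) v w) ∧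
      (∀ w, w.Sublist x → ∃ v, v.Sublist y ∧ TraceEquiv (Indep D) v w) := by
    intro x y h
    induction h with
    | rel x y hs =>
        constructor
        · intro w hw; exact step_sublist hs hw
        · intro w hw
          have hs' : SwapStep (Indep D) y x := by
            obtain ⟨p, q, a, b, hI⟩ := hs
            exact SwapStep.swap p q b a ⟨hI.1.symm, fun hd => hI.2 (hsym _ _ hd)⟩
          exact step_sublist hs' hw
    | refl x => exact ⟨fun w hw => ⟨w, hw, Relation.EqvGen.refl _⟩,
        fun w hw => ⟨w, hw, Relation.EqvGen.refl _⟩⟩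
    | symm x y h ih => exact ⟨ih.2, ih.1⟩
    | trans x y z hxy hyz ih1 ih2 =>
        constructor
        · intro w hw
          obtain ⟨v1, hv1, he1⟩ := ih2.1 w hw
          obtain ⟨v2, hv2, he2⟩ := ih1.1 v1 hv1
          exact ⟨v2, hv2, Relation.EqvGen.trans _ _ _ he2 he1⟩
        · intro w hw
          obtain ⟨v1, hv1, he1⟩ := ih1.2 w hw
          obtain ⟨v2, hv2, he2⟩ := ih2.2 v1 hv1
          exact ⟨v2, hv2, Relation.EqvGen.trans _ _ _ he2 he1⟩
  exact (key u u' hequiv).1 v' hsub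
end

section
/- If a, b, c ∈ A with (a,c) ∉ D, (a,b) ∈ D, and (b,c) ∈ D (where a,b,c pairwise distinct), then the subword relation ⪯ on A* is not left-closed: specifically, ca ~ ac ⪯ abc, but there is no word w with ca ⪯ w and w ~ abc. -/
variable {A : Type*}

lemma swapStep_symm {I : A → A → Prop} (hI : ∀ x y, I x y → I y x)
    {u v : List A} (h : SwapStep I u v) : SwapStep I v u := by
  cases h with
  | swap u v x y h => exact SwapStep.swap u v y x (hI x y h)

theorem stmt10 [Fintype A] (D : A → A → Prop)
    (hrefl : ∀ x, D x x) (hsym : ∀ x y, D x y → D y x)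
    (a b c : A) (hab : a ≠ b) (hbc : b ≠ c) (hac : a ≠ c)
    (hDac : ¬ D a c) (hDab : D a b) (hDbc : D b c) :
    TraceEquiv (Indep D) [c, a] [a, c] ∧ List.Sublist [a, c] [a, b, c] ∧
      (¬ ∃ w, List.Sublist [c, a] w ∧ TraceEquiv (Indep D) w [a, b, c]) ∧
      ¬ LeftClosed (Indep D) (fun u v : List A => u.Sublist v) := by
  classical
  have hIsymm : ∀ x y, Indep D x y → Indep D y x := by
    rintro x y ⟨h1, h2⟩
    exact ⟨h1.symm, fun h => h2 (hsym _ _ h)⟩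
  -- no swap step out of [a,b,c]
  have noStep : ∀ w, ¬ SwapStep (Indep D) [a, b, c] w := by
    have key : ∀ L w, SwapStep (Indep D) L w → L = [a, b, c] → False := by
      intro L w h
      cases h with
      | swap u v x y hI =>
        intro heq
        match u, heq with
        | [], heq =>
          simp only [List.nil_append, List.cons.injEq] at heq
          obtain ⟨rfl, rfl, _⟩ := heq
          exact hI.2 hDab
        | [u1], heq =>
          simp only [List.cons_append, List.nil_append, List.cons.injEq] at heq
          obtain ⟨rfl, rfl, rfl, _⟩ := heq
          exact hI.2 hDbc
        | [u1, u2], heq => simp at heq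
        | (u1 :: u2 :: u3 :: us), heq => simp at heq
    exact fun w hw => key _ w hw rfl
  -- anything trace-equivalent to [a,b,c] equals it
  have rigid : ∀ w, TraceEquiv (Indep D) w [a, b, c] → w = [a, b, c] := by
    intro w hw
    have key : ∀ x y, Relation.EqvGen (SwapStep (Indep D)) x y →
        (x = [a, b, c] → y = [a, b, c]) ∧ (y = [a, b, c] → x = [a, b, c]) := by
      intro x y hxy
      induction hxy with
      | rel x y h =>
        constructor
        · rintro rfl; exact absurd h (noStep y)
        · rintro rfl; exact absurd (swapStep_symm hIsymm h) (noStep x)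
      | refl x => exact ⟨id, id⟩
      | symm x y _ ih => exact ⟨ih.2, ih.1⟩
      | trans x y z _ _ ih1 ih2 =>
        exact ⟨fun h => ih2.1 (ih1.1 h), fun h => ih1.2 (ih2.2 h)⟩
    exact (key w [a, b, c] hw).2 rfl
  -- [c,a] is not a subword of [a,b,c]
  have hca_not_sub : ¬ List.Sublist [c, a] [a, b, c] := by
    intro h
    set f : A → ℕ := fun x => if x = a then 0 else if x = b then 1 else 2 with hf
    have hm := h.map f
    have hfa : f a = 0 := by simp [hf]
    have hfb : f b = 1 := by simp [hf, Ne.symm hab]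
    have hfc : f c = 2 := by simp [hf, Ne.symm hac, Ne.symm hbc]
    simp only [List.map_cons, List.map_nil, hfa, hfb, hfc] at hm
    exact absurd hm (by decide)
  have third : ¬ ∃ w, List.Sublist [c, a] w ∧ TraceEquiv (Indep D) w [a, b, c] := by
    rintro ⟨w, hsub, hw⟩
    rw [rigid w hw] at hsub
    exact hca_not_sub hsub
  refine ⟨?_, ?_, third, ?_⟩
  · exact Relation.EqvGen.rel _ _
      (SwapStep.swap [] [] c a ⟨fun h => hac h.symm, fun h => hDac (hsym _ _ h)⟩)
  · exact (List.sublist_cons_self b [c]).cons₂ a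
  · intro hLC
    obtain ⟨v, hv1, hv2⟩ := hLC [c, a] [a, c] [a, b, c]
      (Relation.EqvGen.rel _ _
        (SwapStep.swap [] [] c a ⟨fun h => hac h.symm, fun h => hDac (hsym _ _ h)⟩))
      ((List.sublist_cons_self b [c]).cons₂ a)
    exact third ⟨v, hv1, hv2⟩
end

section
/- For a trace-pushdown system P = (Q, Δ), the saturated system P^(∞) has the same reachability relation: for any configurations (p,[u]) and (q,[v]), (p,[u]) ⊢*_P (q,[v]) if and only if (p,[u]) ⊢*_{P^(∞)} (q,[v]). -/
variable {A : Type*}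

/-- The setoid of trace equivalence. -/
def traceSetoid (I : A → A → Prop) : Setoid (List A) where
  r := TraceEquiv I
  iseqv := ⟨fun x => Relation.EqvGen.refl x, fun h => Relation.EqvGen.symm _ _ h,
    fun h₁ h₂ => Relation.EqvGen.trans _ _ _ h₁ h₂⟩

/-- The trace monoid `M(D) = A*/~` (as a quotient of words). -/
def TraceMon (I : A → A → Prop) := Quotient (traceSetoid I)

/-- The trace `[u]` induced by a word `u`. -/
def trc (I : A → A → Prop) (u : List A) : TraceMon I := Quotient.mk (traceSetoid I) u

/-- One step of a pushdown system with trace semantics: replace the prefix `[a]`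
of the pushdown by `[w]`, using a transition `(p,a,w,q) ∈ Δ`. -/
def Step {Q : Type*} (I : A → A → Prop) (Δ : Set (Q × A × List A × Q)) :
    Q × TraceMon I → Q × TraceMon I → Prop :=
  fun c d => ∃ a w x, (c.1, a, w, d.1) ∈ Δ ∧ c.2 = trc I (a :: x) ∧ d.2 = trc I (w ++ x)

/-- The reachability relation `⊢*` of a pushdown system with trace semantics. -/
def Reach {Q : Type*} (I : A → A → Prop) (Δ : Set (Q × A × List A × Q)) :
    Q × TraceMon I → Q × TraceMon I → Prop :=
  Relation.ReflTransGen (Step I Δ)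

/-- The set of transitions `Δ^(0)`: all words written are put into lexicographic
normal form. -/
def Delta0 {Q : Type*} (lnf : List A → List A) (Δ : Set (Q × A × List A × Q)) :
    Set (Q × A × List A × Q) :=
  {t | ∃ p a w q, (p, a, w, q) ∈ Δ ∧ t = (p, a, lnf w, q)}

/-- One saturation step: add all shortcuts `(p, a, lnf (u ++ v), r)` obtained from
transitions `(p, a, u b v, q)` and `(q, b, ε, r)` with `u ∥ b`. -/
def SatStep {Q : Type*} (D : A → A → Prop) (lnf : List A → List A)
    (Δk : Set (Q × A × List A × Q)) : Set (Q × A × List A × Q) :=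
  Δk ∪ {t | ∃ p a u b v q r, (p, a, u ++ b :: v, q) ∈ Δk ∧ (q, b, ([] : List A), r) ∈ Δk ∧
      (∀ x ∈ u, ¬ D x b) ∧ t = (p, a, lnf (u ++ v), r)}

/-- The saturated transition set `Δ^(∞) = ⋃ₖ Δ^(k)`. -/
def DeltaInf {Q : Type*} (D : A → A → Prop) (lnf : List A → List A)
    (Δ : Set (Q × A × List A × Q)) : Set (Q × A × List A × Q) :=
  ⋃ k : ℕ, (SatStep D lnf)^[k] (Delta0 lnf Δ)

section Aux

variable {I D : A → A → Prop}

lemma swapStep_append_left (w : List A) {u v : List A} (h : SwapStep I u v) :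
    SwapStep I (w ++ u) (w ++ v) := by
  obtain ⟨u', v', a, b, hab⟩ := h
  rw [← List.append_assoc, ← List.append_assoc]
  exact SwapStep.swap _ _ _ _ hab

lemma swapStep_append_right (w : List A) {u v : List A} (h : SwapStep I u v) :
    SwapStep I (u ++ w) (v ++ w) := by
  obtain ⟨u', v', a, b, hab⟩ := h
  have := SwapStep.swap (I := I) u' (v' ++ w) a b hab
  simpa [List.append_assoc] using this

lemma traceEquiv_append_left (w : List A) {u v : List A} (h : TraceEquiv I u v) :
    TraceEquiv I (w ++ u) (w ++ v) := by
  induction h with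
  | rel x y hxy => exact .rel _ _ (swapStep_append_left w hxy)
  | refl x => exact .refl _
  | symm x y _ ih => exact .symm _ _ ih
  | trans x y z _ _ ih1 ih2 => exact .trans _ _ _ ih1 ih2

lemma traceEquiv_append_right (w : List A) {u v : List A} (h : TraceEquiv I u v) :
    TraceEquiv I (u ++ w) (v ++ w) := by
  induction h with
  | rel x y hxy => exact .rel _ _ (swapStep_append_right w hxy)
  | refl x => exact .refl _
  | symm x y _ ih => exact .symm _ _ ih
  | trans x y z _ _ ih1 ih2 => exact .trans _ _ _ ih1 ih2

lemma traceEquiv_comm (hrefl : ∀ a, D a a) (b : A) (v : List A) :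
    ∀ u : List A, (∀ x ∈ u, ¬ D x b) →
      TraceEquiv (Indep D) (u ++ b :: v) (b :: (u ++ v)) := by
  intro u
  induction u with
  | nil => intro _; exact .refl _
  | cons c u ih =>
    intro h
    have hcb : ¬ D c b := h c (by simp)
    have hne : c ≠ b := fun hEq => hcb (hEq ▸ hrefl b)
    have h1 : TraceEquiv (Indep D) (c :: (u ++ b :: v)) (c :: (b :: (u ++ v))) :=
      traceEquiv_append_left [c] (ih fun x hx => h x (by simp [hx]))
    have h2 : SwapStep (Indep D) ([] ++ c :: b :: (u ++ v)) ([] ++ b :: c :: (u ++ v)) :=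
      SwapStep.swap [] (u ++ v) c b ⟨hne, hcb⟩
    exact .trans _ _ _ (by exact h1) (.rel _ _ (by simpa using h2))

lemma trc_eq_of_equiv {u v : List A} (h : TraceEquiv I u v) : trc I u = trc I v :=
  Quotient.sound h

end Aux

section Main

variable {D : A → A → Prop} {Q : Type*} {Δ : Set (Q × A × List A × Q)}
  {lnf : List A → List A}

lemma step_iterate_reach (hrefl : ∀ a, D a a)
    (hlnf₁ : ∀ w, TraceEquiv (Indep D) w (lnf w)) (k : ℕ) :
    ∀ c d, Step (Indep D) ((SatStep D lnf)^[k] (Delta0 lnf Δ)) c d →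
      Reach (Indep D) Δ c d := by
  induction k with
  | zero =>
    rintro c d ⟨a, w, x, ht, hc, hd⟩
    simp only [Function.iterate_zero, id_eq] at ht
    obtain ⟨p', a', w', q', hΔ, heq⟩ := ht
    obtain ⟨h1, h2, h3, h4⟩ : c.1 = p' ∧ a = a' ∧ w = lnf w' ∧ d.1 = q' := by
      simpa [Prod.ext_iff] using heq
    refine Relation.ReflTransGen.single ⟨a, w', x, ?_, hc, ?_⟩
    · rw [h1, h2, h4]; exact hΔ
    · rw [hd, h3]
      exact (trc_eq_of_equiv (traceEquiv_append_right x (hlnf₁ w'))).symm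
  | succ k ih =>
    rintro c d ⟨a, w, x, ht, hc, hd⟩
    rw [Function.iterate_succ_apply'] at ht
    rcases ht with ht | ht
    · exact ih c d ⟨a, w, x, ht, hc, hd⟩
    · obtain ⟨p', a', u, b, v, q', r', h1, h2, hub, heq⟩ := ht
      obtain ⟨e1, e2, e3, e4⟩ : c.1 = p' ∧ a = a' ∧ w = lnf (u ++ v) ∧ d.1 = r' := by
        simpa [Prod.ext_iff] using heq
      set mid : Q × TraceMon (Indep D) := (q', trc (Indep D) ((u ++ b :: v) ++ x)) with hmid
      have s1 : Step (Indep D) ((SatStep D lnf)^[k] (Delta0 lnf Δ)) c mid := by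
        refine ⟨a, u ++ b :: v, x, ?_, hc, rfl⟩
        rw [e1, e2]; exact h1
      have hcomm : TraceEquiv (Indep D) ((u ++ b :: v) ++ x) (b :: ((u ++ v) ++ x)) := by
        have := traceEquiv_comm hrefl b (v ++ x) u hub
        simpa [List.append_assoc] using this
      have s2 : Step (Indep D) ((SatStep D lnf)^[k] (Delta0 lnf Δ)) mid d := by
        refine ⟨b, [], (u ++ v) ++ x, ?_, trc_eq_of_equiv hcomm, ?_⟩
        · rw [e4]; exact h2
        · rw [hd, e3]
          simpa using (trc_eq_of_equiv (traceEquiv_append_right x (hlnf₁ (u ++ v)))).symm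
      exact (ih c mid s1).trans (ih mid d s2)

lemma reach_inf_le (hrefl : ∀ a, D a a)
    (hlnf₁ : ∀ w, TraceEquiv (Indep D) w (lnf w)) {c d : Q × TraceMon (Indep D)}
    (h : Reach (Indep D) (DeltaInf D lnf Δ) c d) : Reach (Indep D) Δ c d := by
  induction h with
  | refl => exact Relation.ReflTransGen.refl
  | tail _ hstep ih =>
    refine ih.trans ?_
    obtain ⟨a, w, x, ht, hc, hd⟩ := hstep
    obtain ⟨k, htk⟩ := Set.mem_iUnion.1 ht
    exact step_iterate_reach hrefl hlnf₁ k _ _ ⟨a, w, x, htk, hc, hd⟩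

end Main

theorem stmt17 [Fintype A] [LinearOrder A] (D : A → A → Prop)
    (hrefl : ∀ a, D a a) (hsym : ∀ a b, D a b → D b a)
    {Q : Type*} [Fintype Q] (Δ : Set (Q × A × List A × Q)) (hfin : Δ.Finite)
    (hP1 : ∀ p a w q, (p, a, w, q) ∈ Δ → ∀ c ∈ w, ∀ b, D c b → D a b)
    (hP2' : ∀ p a v q b w r, (p, a, v, q) ∈ Δ → (q, b, w, r) ∈ Δ →
        (∀ x ∈ a :: v, ∀ y ∈ b :: w, ¬ D x y) →
        ∃ q', (p, b, w, q') ∈ Δ ∧ (q', a, v, r) ∈ Δ)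
    (lnf : List A → List A)
    (hlnf₁ : ∀ w, TraceEquiv (Indep D) w (lnf w))
    (hlnf₂ : ∀ w v, TraceEquiv (Indep D) w v → ¬ List.Lex (· < ·) v (lnf w))
    (p q : Q) (u v : List A) :
    Reach (Indep D) Δ (p, trc (Indep D) u) (q, trc (Indep D) v) ↔
      Reach (Indep D) (DeltaInf D lnf Δ) (p, trc (Indep D) u) (q, trc (Indep D) v) := by
  constructor
  · intro h
    refine Relation.ReflTransGen.mono (r := Step (Indep D) Δ)
      (p := Step (Indep D) (DeltaInf D lnf Δ)) (fun c d hs => ?_) _ _ h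
    obtain ⟨a, w, x, ht, hc, hd⟩ := hs
    refine ⟨a, lnf w, x, ?_, hc, ?_⟩
    · refine Set.mem_iUnion.2 ⟨0, ?_⟩
      simp only [Function.iterate_zero, id_eq]
      exact ⟨c.1, a, w, d.1, ht, rfl⟩
    · rw [hd]
      exact trc_eq_of_equiv (traceEquiv_append_right x (hlnf₁ w))
  · exact reach_inf_le hrefl hlnf₁
end

section
/- For every rational trace language L ⊆ M(D) there exist an extended dependence alphabet (A', D') with A ⊆ A' and D = D' ∩ (A × A), a trace-pushdown system P over (A', D'), a configuration c, and a state q such that L = {[w] ∈ M(D) : c ⊢*_P (q,[w])}; i.e., every rational trace language arises as the forwards reachability set of a single configuration. -/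
variable {A : Type*}

section Auxil

variable {B : Type*}

lemma SwapStep.symm' {I : A → A → Prop} (hsym : ∀ a b, I a b → I b a)
    {x y : List A} (h : SwapStep I x y) : SwapStep I y x := by
  cases h with
  | swap u v a b hI => exact SwapStep.swap u v b a (hsym a b hI)

lemma traceEquiv_perm {I : A → A → Prop} {x y : List A}
    (h : TraceEquiv I x y) : x.Perm y := by
  induction h with
  | rel x y hs =>
    cases hs with
    | swap u v a b _ => exact List.Perm.append_left u (List.Perm.swap b a v)
  | refl x => exact List.Perm.refl x
  | symm x y _ ih => exact ih.symm
  | trans x y z _ _ ih1 ih2 => exact ih1.trans ih2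

lemma TraceEquiv.consCongr {I : A → A → Prop} (c : A) {x y : List A}
    (h : TraceEquiv I x y) : TraceEquiv I (c :: x) (c :: y) := by
  induction h with
  | rel x y hs =>
    cases hs with
    | swap u v a b hI =>
      exact Relation.EqvGen.rel _ _ (by simpa using SwapStep.swap (c::u) v a b hI)
  | refl x => exact Relation.EqvGen.refl _
  | symm x y _ ih => exact Relation.EqvGen.symm _ _ ih
  | trans x y z _ _ ih1 ih2 => exact Relation.EqvGen.trans _ _ _ ih1 ih2

lemma TraceEquiv.mapCongr {I : A → A → Prop} {I' : B → B → Prop} (ι : A → B)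
    (hI : ∀ a b, I a b → I' (ι a) (ι b)) {x y : List A}
    (h : TraceEquiv I x y) : TraceEquiv I' (x.map ι) (y.map ι) := by
  induction h with
  | rel x y hs =>
    cases hs with
    | swap u v a b hab =>
      refine Relation.EqvGen.rel _ _ ?_
      simpa using SwapStep.swap (u.map ι) (v.map ι) (ι a) (ι b) (hI a b hab)
  | refl x => exact Relation.EqvGen.refl _
  | symm _ _ _ ih => exact Relation.EqvGen.symm _ _ ih
  | trans _ _ _ _ _ ih1 ih2 => exact Relation.EqvGen.trans _ _ _ ih1 ih2

lemma traceEquiv_map_pullback {I : A → A → Prop} {I' : B → B → Prop} {ι : A → B}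
    (_hinj : Function.Injective ι) (hsym : ∀ a b, I' a b → I' b a)
    (hI : ∀ a b, I' (ι a) (ι b) → I a b) {x y : List B}
    (h : TraceEquiv I' x y) :
    (∀ u, x = u.map ι → ∃ v, y = v.map ι ∧ TraceEquiv I u v) ∧
    (∀ v, y = v.map ι → ∃ u, x = u.map ι ∧ TraceEquiv I u v) := by
  have base : ∀ x y : List B, SwapStep I' x y → ∀ u, x = u.map ι →
      ∃ v, y = v.map ι ∧ TraceEquiv I u v := by
    intro x y hs u hx
    cases hs with
    | swap w₁ w₂ a b hab =>
      obtain ⟨u₁, u₂, rfl, h1, h2⟩ := List.map_eq_append_iff.mp hx.symm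
      obtain ⟨c, u₃, rfl, rfl, h3⟩ := List.map_eq_cons_iff.mp h2
      obtain ⟨d, u₄, rfl, rfl, rfl⟩ := List.map_eq_cons_iff.mp h3
      refine ⟨u₁ ++ d :: c :: u₄, by simp [← h1], ?_⟩
      exact Relation.EqvGen.rel _ _ (SwapStep.swap u₁ u₄ c d (hI c d hab))
  induction h with
  | rel x y hs =>
    refine ⟨base x y hs, fun v hv => ?_⟩
    obtain ⟨u, hu, he⟩ := base y x (hs.symm' hsym) v hv
    exact ⟨u, hu, Relation.EqvGen.symm _ _ he⟩
  | refl x =>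
    exact ⟨fun u hu => ⟨u, hu, Relation.EqvGen.refl _⟩,
           fun u hu => ⟨u, hu, Relation.EqvGen.refl _⟩⟩
  | symm x y _ ih =>
    refine ⟨fun u hu => ?_, fun v hv => ?_⟩
    · obtain ⟨v, hv, he⟩ := ih.2 u hu
      exact ⟨v, hv, Relation.EqvGen.symm _ _ he⟩
    · obtain ⟨w, hw, he⟩ := ih.1 v hv
      exact ⟨w, hw, Relation.EqvGen.symm _ _ he⟩
  | trans x y z _ _ ih1 ih2 =>
    refine ⟨fun u hu => ?_, fun v hv => ?_⟩
    · obtain ⟨v, hv, he1⟩ := ih1.1 u hu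
      obtain ⟨w, hw, he2⟩ := ih2.1 v hv
      exact ⟨w, hw, Relation.EqvGen.trans _ _ _ he1 he2⟩
    · obtain ⟨w, hw, he2⟩ := ih2.2 v hv
      obtain ⟨w', hw', he1⟩ := ih1.2 w hw
      exact ⟨w', hw', Relation.EqvGen.trans _ _ _ he1 he2⟩

lemma traceEquiv_head_fixed {I' : B → B → Prop} (hsym : ∀ a b, I' a b → I' b a)
    {h0 : B} (hdep : ∀ b, ¬ I' h0 b) {x y : List B}
    (h : TraceEquiv I' x y) :
    (∀ x', x = h0 :: x' → ∃ y', y = h0 :: y' ∧ TraceEquiv I' x' y') ∧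
    (∀ y', y = h0 :: y' → ∃ x', x = h0 :: x' ∧ TraceEquiv I' x' y') := by
  have base : ∀ x y : List B, SwapStep I' x y → ∀ x', x = h0 :: x' →
      ∃ y', y = h0 :: y' ∧ TraceEquiv I' x' y' := by
    intro x y hs x' hx
    cases hs with
    | swap u v a b hab =>
      cases u with
      | nil =>
        simp only [List.nil_append, List.cons.injEq] at hx
        exact absurd hab (hx.1 ▸ hdep b)
      | cons c u' =>
        simp only [List.cons_append, List.cons.injEq] at hx
        obtain ⟨rfl, rfl⟩ := hx
        exact ⟨u' ++ b :: a :: v, rfl,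
          Relation.EqvGen.rel _ _ (SwapStep.swap u' v a b hab)⟩
  induction h with
  | rel x y hs =>
    refine ⟨base x y hs, fun y' hy => ?_⟩
    obtain ⟨x', hx', he⟩ := base y x (hs.symm' hsym) y' hy
    exact ⟨x', hx', Relation.EqvGen.symm _ _ he⟩
  | refl x =>
    exact ⟨fun u hu => ⟨u, hu, Relation.EqvGen.refl _⟩,
           fun u hu => ⟨u, hu, Relation.EqvGen.refl _⟩⟩
  | symm x y _ ih =>
    refine ⟨fun u hu => ?_, fun v hv => ?_⟩
    · obtain ⟨v, hv, he⟩ := ih.2 u hu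
      exact ⟨v, hv, Relation.EqvGen.symm _ _ he⟩
    · obtain ⟨w, hw, he⟩ := ih.1 v hv
      exact ⟨w, hw, Relation.EqvGen.symm _ _ he⟩
  | trans x y z _ _ ih1 ih2 =>
    refine ⟨fun u hu => ?_, fun v hv => ?_⟩
    · obtain ⟨v, hv, he1⟩ := ih1.1 u hu
      obtain ⟨w, hw, he2⟩ := ih2.1 v hv
      exact ⟨w, hw, Relation.EqvGen.trans _ _ _ he1 he2⟩
    · obtain ⟨w, hw, he2⟩ := ih2.2 v hv
      obtain ⟨w', hw', he1⟩ := ih1.2 w hw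
      exact ⟨w', hw', Relation.EqvGen.trans _ _ _ he1 he2⟩

lemma trc_eq_iff {I : A → A → Prop} {x y : List A} :
    trc I x = trc I y ↔ TraceEquiv I x y :=
  ⟨fun h => Quotient.exact h, fun h => Quotient.sound h⟩

end Auxil

theorem stmt19 {A : Type} [Fintype A] (D : A → A → Prop)
    (hrefl : ∀ a, D a a) (hsym : ∀ a b, D a b → D b a)
    (L : Set (TraceMon (Indep D)))
    (hL : ∃ K : Language A, K.IsRegular ∧ L = {s | ∃ u ∈ K, s = trc (Indep D) u}) :
    ∃ (A' : Type) (_ : Fintype A') (ι : A ↪ A') (D' : A' → A' → Prop),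
      (∀ a, D' a a) ∧ (∀ a b, D' a b → D' b a) ∧
      (∀ a b : A, D a b ↔ D' (ι a) (ι b)) ∧
      ∃ (Q : Type) (_ : Fintype Q) (Δ : Set (Q × A' × List A' × Q)) (_ : Δ.Finite),
        (∀ p a w q, (p, a, w, q) ∈ Δ → ∀ c ∈ w, ∀ b, D' c b → D' a b) ∧
        (∀ p a v q b w r, (p, a, v, q) ∈ Δ → (q, b, w, r) ∈ Δ →
            (∀ x ∈ a :: v, ∀ y ∈ b :: w, ¬ D' x y) →
            ∃ q', (p, b, w, q') ∈ Δ ∧ (q', a, v, r) ∈ Δ) ∧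
        ∃ (c : Q × TraceMon (Indep D')) (q : Q),
          ∀ u : List A, trc (Indep D) u ∈ L ↔
            Reach (Indep D') Δ c (q, trc (Indep D') (u.map ι)) := by
  classical
  obtain ⟨K, ⟨σ, instσ, M, hM⟩, hLK⟩ := hL
  haveI := instσ
  -- extended alphabet: add a fresh letter `none` dependent on everything
  refine ⟨Option A, inferInstance, Function.Embedding.some,
    (fun x y => ∀ a ∈ x, ∀ b ∈ y, D a b), ?_, ?_, ?_, ?_⟩
  · intro x a ha b hb
    cases x with
    | none => simp at ha
    | some c =>
      simp only [Option.mem_def, Option.some.injEq] at ha hb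
      subst ha; subst hb; exact hrefl _
  · intro x y h a ha b hb
    exact hsym b a (h b hb a ha)
  · intro a b
    constructor
    · intro h x hx y hy
      simp only [Function.Embedding.some_apply, Option.mem_def, Option.some.injEq] at hx hy
      subst hx; subst hy; exact h
    · intro h
      exact h a (by simp) b (by simp)
  set A' : Type := Option A with hA'
  set D' : A' → A' → Prop := fun x y => ∀ a ∈ x, ∀ b ∈ y, D a b with hD'
  set Q' : Type := Sum (Option σ) Unit with hQ'
  set Δ : Set (Q' × A' × List A' × Q') :=
    {t | (∃ f ∈ M.accept, t = (Sum.inl none, none, [none], Sum.inl (some f))) ∨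
         (∃ r a, t = (Sum.inl (some (M.step r a)), none, [none, some a], Sum.inl (some r))) ∨
         t = (Sum.inl (some M.start), none, [], Sum.inr ())} with hΔ
  -- basic facts about D'
  have hD'none : ∀ b : A', D' none b := by
    intro b a ha; exact absurd ha (Option.not_mem_none a)
  have hdep : ∀ b : A', ¬ Indep D' none b := by
    intro b h; exact h.2 (hD'none b)
  have hsymI' : ∀ a b : A', Indep D' a b → Indep D' b a := by
    rintro a b ⟨h1, h2⟩
    exact ⟨h1.symm, fun h => h2 (fun x hx y hy => hsym _ _ (h y hy x hx))⟩
  have hIfwd : ∀ a b : A, Indep D a b → Indep D' (some a) (some b) := by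
    rintro a b ⟨h1, h2⟩
    refine ⟨fun hc => h1 (Option.some_injective A hc), fun h => h2 ?_⟩
    exact h a rfl b rfl
  have hIbwd : ∀ a b : A, Indep D' (some a) (some b) → Indep D a b := by
    rintro a b ⟨h1, h2⟩
    refine ⟨fun hc => h1 (congrArg some hc), fun h => h2 ?_⟩
    intro x hx y hy
    obtain rfl : a = x := Option.some_injective A hx
    obtain rfl : b = y := Option.some_injective A hy
    exact h
  refine ⟨Q', inferInstance, Δ, ?_, ?_, ?_, ?_⟩
  · -- finiteness
    rw [hΔ]
    have hsub : {t : Q' × A' × List A' × Q' |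
        (∃ f ∈ M.accept, t = (Sum.inl none, none, [none], Sum.inl (some f))) ∨
        (∃ r a, t = (Sum.inl (some (M.step r a)), none, [none, some a], Sum.inl (some r))) ∨
        t = (Sum.inl (some M.start), none, [], Sum.inr ())} ⊆
        (Set.range (fun f : σ => ((Sum.inl none : Q'), (none : A'), ([none] : List A'),
            (Sum.inl (some f) : Q'))))
        ∪ (Set.range (fun p : σ × A => ((Sum.inl (some (M.step p.1 p.2)) : Q'), (none : A'),
            ([none, some p.2] : List A'), (Sum.inl (some p.1) : Q'))))
        ∪ {((Sum.inl (some M.start) : Q'), (none : A'), ([] : List A'), (Sum.inr () : Q'))} := by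
      rintro t (⟨f, _, rfl⟩ | ⟨r, a, rfl⟩ | rfl)
      · exact Or.inl (Or.inl ⟨f, rfl⟩)
      · exact Or.inl (Or.inr ⟨(r, a), rfl⟩)
      · exact Or.inr rfl
    exact Set.Finite.subset (((Set.finite_range _).union (Set.finite_range _)).union
      (Set.finite_singleton _)) hsub
  · -- (P1)
    rintro p a w q hmem c hc b hcb
    rw [hΔ] at hmem
    have ha : a = none := by
      rcases hmem with ⟨f, _, h⟩ | ⟨r', b', h⟩ | h <;>
        · simp only [Prod.mk.injEq] at h; exact h.2.1
    subst ha; exact hD'none b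
  · -- (P2')
    rintro p a v q b w r h1 h2 hind
    rw [hΔ] at h1 h2
    have ha : a = none := by
      rcases h1 with ⟨f, _, h⟩ | ⟨r', b', h⟩ | h <;>
        · simp only [Prod.mk.injEq] at h; exact h.2.1
    have hb : b = none := by
      rcases h2 with ⟨f, _, h⟩ | ⟨r', b', h⟩ | h <;>
        · simp only [Prod.mk.injEq] at h; exact h.2.1
    subst ha; subst hb
    exact absurd (hD'none none) (hind none (by simp) none (by simp))
  -- configuration and final state
  refine ⟨(Sum.inl none, trc (Indep D') [none]), Sum.inr (), fun u => ?_⟩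
  have hmapι : ∀ v : List A, v.map (Function.Embedding.some : A ↪ A') = v.map some := by
    intro v; rfl
  constructor
  · -- forward: trc u ∈ L → reachable
    intro hmem
    rw [hLK] at hmem
    obtain ⟨w, hwK, hw⟩ := hmem
    rw [← hM, DFA.mem_accepts] at hwK
    have run : ∀ (w : List A) (r : σ) (x : List A'),
        Reach (Indep D') Δ
          (Sum.inl (some (M.evalFrom r w)), trc (Indep D') (none :: x))
          (Sum.inl (some r), trc (Indep D') (none :: (w.map some ++ x))) := by
      intro w
      induction w with
      | nil => intro r x; exact Relation.ReflTransGen.refl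
      | cons a w ih =>
        intro r x
        have h1 := ih (M.step r a) x
        have hstep : Step (Indep D') Δ
            (Sum.inl (some (M.step r a)), trc (Indep D') (none :: (w.map some ++ x)))
            (Sum.inl (some r), trc (Indep D') (none :: ((a :: w).map some ++ x))) :=
          ⟨none, [none, some a], w.map some ++ x,
            by rw [hΔ]; exact Or.inr (Or.inl ⟨r, a, rfl⟩), rfl, rfl⟩
        exact Relation.ReflTransGen.tail h1 hstep
    have s1 : Step (Indep D') Δ
        (Sum.inl none, trc (Indep D') [none])
        (Sum.inl (some (M.eval w)), trc (Indep D') (none :: ([] : List A'))) :=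
      ⟨none, [none], [], by rw [hΔ]; exact Or.inl ⟨M.eval w, hwK, rfl⟩, rfl, rfl⟩
    have s2 := run w M.start []
    have s3 : Step (Indep D') Δ
        (Sum.inl (some M.start), trc (Indep D') (none :: (w.map some ++ [])))
        (Sum.inr (), trc (Indep D') (w.map some)) :=
      ⟨none, [], w.map some ++ [], by rw [hΔ]; exact Or.inr (Or.inr rfl), rfl, by simp⟩
    have chain : Reach (Indep D') Δ (Sum.inl none, trc (Indep D') [none])
        (Sum.inr (), trc (Indep D') (w.map some)) :=
      Relation.ReflTransGen.tail ((Relation.ReflTransGen.single s1).trans s2) s3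
    have heq : trc (Indep D') (u.map (Function.Embedding.some : A ↪ A')) =
        trc (Indep D') (w.map some) := by
      rw [hmapι]
      exact Quotient.sound (TraceEquiv.mapCongr some hIfwd (trc_eq_iff.mp hw))
    rw [heq]
    exact chain
  · -- backward: reachable → trc u ∈ L
    intro hreach
    have hinv : ∀ cfg, Reach (Indep D') Δ (Sum.inl none, trc (Indep D') [none]) cfg →
        (cfg = ((Sum.inl none : Q'), trc (Indep D') [none])) ∨
        (∃ r : σ, ∃ v : List A,
          cfg = (Sum.inl (some r), trc (Indep D') (none :: v.map some)) ∧
            M.evalFrom r v ∈ M.accept) ∨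
        (∃ v : List A, cfg = ((Sum.inr () : Q'), trc (Indep D') (v.map some)) ∧
            M.evalFrom M.start v ∈ M.accept) := by
      intro cfg h
      induction h with
      | refl => exact Or.inl rfl
      | tail hrt hstep ih =>
        rename_i mid fin
        obtain ⟨a, w, x, hmemt, hc2, hd2⟩ := hstep
        obtain ⟨f1, f2⟩ := fin
        replace hd2 : f2 = trc (Indep D') (w ++ x) := hd2
        rw [hΔ] at hmemt
        rcases ih with hc | ⟨r, v, hc, hacc⟩ | ⟨v, hc, hacc⟩
        · -- from initial configuration
          subst hc
          have hp := traceEquiv_perm (trc_eq_iff.mp hc2)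
          have hax : a :: x = [none] := (List.singleton_perm.mp hp).symm
          injection hax with ha hx
          subst ha; subst hx
          rcases hmemt with ⟨f, hf, h⟩ | ⟨r', b', h⟩ | h <;>
            simp only [Prod.mk.injEq] at h
          · obtain ⟨-, -, hw, hf1⟩ := h
            refine Or.inr (Or.inl ⟨f, [], ?_, hf⟩)
            rw [Prod.mk.injEq]
            refine ⟨hf1, ?_⟩
            rw [hd2, hw]
            rfl
          · exact absurd h.1 (by intro hh; injection hh with hh; injection hh)
          · exact absurd h.1 (by intro hh; injection hh with hh; injection hh)
        · -- from a DFA state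
          subst hc
          rcases hmemt with ⟨f, hf, h⟩ | ⟨r₀, b₀, h⟩ | h <;>
            simp only [Prod.mk.injEq] at h
          · exact absurd h.1 (by intro hh; injection hh with hh; injection hh)
          · obtain ⟨hr, ha, hw, hf1⟩ := h
            rw [Sum.inl.injEq, Option.some.injEq] at hr
            subst ha
            obtain ⟨y', hy', he⟩ :=
              (traceEquiv_head_fixed hsymI' hdep (trc_eq_iff.mp hc2)).1 (v.map some) rfl
            injection hy' with _ hyx
            subst hyx
            refine Or.inr (Or.inl ⟨r₀, b₀ :: v, ?_, ?_⟩)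
            · rw [Prod.mk.injEq]
              refine ⟨hf1, ?_⟩
              rw [hd2, hw]
              exact Quotient.sound
                (TraceEquiv.consCongr none
                  (TraceEquiv.consCongr (some b₀) (Relation.EqvGen.symm _ _ he)))
            · show M.evalFrom (M.step r₀ b₀) v ∈ M.accept
              rw [← hr]
              exact hacc
          · obtain ⟨hr, ha, hw, hf1⟩ := h
            rw [Sum.inl.injEq, Option.some.injEq] at hr
            subst ha
            obtain ⟨y', hy', he⟩ :=
              (traceEquiv_head_fixed hsymI' hdep (trc_eq_iff.mp hc2)).1 (v.map some) rfl
            injection hy' with _ hyx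
            subst hyx
            refine Or.inr (Or.inr ⟨v, ?_, ?_⟩)
            · rw [Prod.mk.injEq]
              refine ⟨hf1, ?_⟩
              rw [hd2, hw]
              exact Quotient.sound (Relation.EqvGen.symm _ _ he)
            · rw [← hr]
              exact hacc
        · -- from the final state: no transitions
          subst hc
          rcases hmemt with ⟨f, _, h⟩ | ⟨r', b', h⟩ | h <;>
            · simp only [Prod.mk.injEq] at h; exact absurd h.1 (by simp)
    rcases hinv _ hreach with hc | ⟨r, v, hc, hacc⟩ | ⟨v, hc, hacc⟩
    · exact absurd (congrArg Prod.fst hc) (by simp)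
    · exact absurd (congrArg Prod.fst hc) (by simp)
    · have h2 : trc (Indep D') (u.map some) = trc (Indep D') (v.map some) := by
        have := congrArg Prod.snd hc
        rw [hmapι u] at this
        exact this
      obtain ⟨v', hv', he⟩ := (traceEquiv_map_pullback (Option.some_injective A) hsymI' hIbwd
        (trc_eq_iff.mp h2)).1 u rfl
      have hvv : v = v' := List.map_injective_iff.mpr (Option.some_injective A) hv'
      subst hvv
      rw [hLK]
      refine ⟨v, ?_, Quotient.sound he⟩
      rw [← hM, DFA.mem_accepts]
      exact hacc
end
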